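/- Let G be the join of two finite simple graphs G_1 and G_2, each having at least 2 vertices. Then G does not have a unique perfect matching; that is, either G has no perfect matching or G has at least two distinct perfect matchings. -/

import Mathlib

/-- The join of two vertex-disjoint graphs: keep the edges of both graphs, and add
all edges between the two vertex sets. -/
def GraphJoin {V₁ V₂ : Type*} (G₁ : SimpleGraph V₁) (G₂ : SimpleGraph V₂) :
    SimpleGraph (V₁ ⊕ V₂) :=
  SimpleGraph.fromRel fun a b =>
    match a, b with
    | Sum.inl a, Sum.inl b => G₁.Adj a b
    | Sum.inr a, Sum.inr b => G₂.Adj a b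
    | _, _ => True

/-!
A perfect matching `M` is not unique as soon as it has an alternating square: `M`-edges `pp'`
and `qq'` such that `pq` and `p'q'` are edges of the graph and `pq` is not in `M`; swapping
`p'` and `q` then gives another perfect matching. In the join of two graphs with at least two
vertices each such a square always exists: either two vertices of `G₁` are matched into `G₂`, and
each of them is joined to the partner of the other, or both `G₁` and `G₂` contain an `M`-edge,
and the join connects the endpoints of these two edges crosswise.
-/

namespace SimpleGraph.Subgraph

open Equiv

variable {V : Type*} {G : SimpleGraph V} {M : G.Subgraph}

lemma IsPerfectMatching.exists_isPerfectMatching_map (hM : M.IsPerfectMatching) (τ : V ≃ V)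
    (hτ : ∀ ⦃v w⦄, M.Adj v w → G.Adj (τ v) (τ w)) :
    ∃ M' : G.Subgraph, M'.IsPerfectMatching ∧ ∀ v w, M'.Adj (τ v) (τ w) ↔ M.Adj v w := by
  refine ⟨{ verts := Set.univ
            Adj := fun a b => M.Adj (τ.symm a) (τ.symm b)
            adj_sub := fun {a b} h => by simpa using hτ h
            edge_vert := fun _ => trivial
            symm := ⟨fun _ _ h => h.symm⟩ }, ?_, fun v w => by simp⟩
  rw [isPerfectMatching_iff]
  intro v
  obtain ⟨w, hvw, hw⟩ := isPerfectMatching_iff.mp hM (τ.symm v)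
  exact ⟨τ w, by simpa using hvw, fun u hu => τ.symm_apply_eq.mp (hw _ hu)⟩

lemma IsPerfectMatching.exists_ne_of_alternating_square {p p' q q' : V} (hM : M.IsPerfectMatching)
    (hpp' : M.Adj p p') (hqq' : M.Adj q q') (hpq : G.Adj p q) (hp'q' : G.Adj p' q')
    (hMpq : ¬ M.Adj p q) :
    ∃ M' : G.Subgraph, M'.IsPerfectMatching ∧ M' ≠ M := by
  classical
  have hp' : ∀ ⦃w⦄, M.Adj p' w → w = p := fun _ h => hM.1.eq_of_adj_left h hpp'.symm
  have hq : ∀ ⦃w⦄, M.Adj q w → w = q' := fun _ h => hM.1.eq_of_adj_left h hqq'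
  have hq'p' : q' ≠ p' := fun h => hpq.ne (hM.1.eq_of_adj_right hpp' (h ▸ hqq'))
  -- the swap moves only the `M`-edges `pp'` and `qq'`, onto `pq` and `p'q'`
  have hτ : ∀ ⦃v w⦄, M.Adj v w → G.Adj (swap p' q v) (swap p' q w) := by
    intro v w hvw
    rcases eq_or_ne v p' with rfl | hv₁
    · rw [hp' hvw, swap_apply_left, swap_apply_of_ne_of_ne hpp'.ne hpq.ne]
      exact hpq.symm
    rcases eq_or_ne v q with rfl | hv₂
    · rw [hq hvw, swap_apply_right, swap_apply_of_ne_of_ne hq'p' hqq'.ne.symm]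
      exact hp'q'
    rw [swap_apply_of_ne_of_ne hv₁ hv₂]
    rcases eq_or_ne w p' with rfl | hw₁
    · rw [hp' hvw.symm, swap_apply_left]
      exact hpq
    rcases eq_or_ne w q with rfl | hw₂
    · rw [hq hvw.symm, swap_apply_right]
      exact hp'q'.symm
    rw [swap_apply_of_ne_of_ne hw₁ hw₂]
    exact hvw.adj_sub
  obtain ⟨M', hM', hM'M⟩ := hM.exists_isPerfectMatching_map (swap p' q) hτ
  refine ⟨M', hM', fun h => hMpq ?_⟩
  have := (hM'M p p').mpr hpp'
  rwa [swap_apply_left, swap_apply_of_ne_of_ne hpp'.ne hpq.ne, h] at this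

end SimpleGraph.Subgraph

namespace SimpleGraph.Subgraph.IsPerfectMatching

open Sum

variable {V₁ V₂ : Type*} {G : SimpleGraph (V₁ ⊕ V₂)} {M : G.Subgraph}

lemma exists_inl_adj_inl_or_crossing [Nontrivial V₁] (hM : M.IsPerfectMatching) :
    (∃ a a', M.Adj (inl a) (inl a')) ∨
      ∃ a a' b b', a ≠ a' ∧ M.Adj (inl a) (inr b) ∧ M.Adj (inl a') (inr b') := by
  obtain ⟨a₁, a₂, ha⟩ := exists_pair_ne V₁
  obtain ⟨w₁, hw₁, -⟩ := hM.1 (hM.2 (inl a₁))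
  obtain ⟨w₂, hw₂, -⟩ := hM.1 (hM.2 (inl a₂))
  rcases w₁ with a₁' | b₁
  · exact .inl ⟨a₁, a₁', hw₁⟩
  rcases w₂ with a₂' | b₂
  · exact .inl ⟨a₂, a₂', hw₂⟩
  exact .inr ⟨a₁, a₂, b₁, b₂, ha, hw₁, hw₂⟩

lemma exists_inr_adj_inr_or_crossing [Nontrivial V₂] (hM : M.IsPerfectMatching) :
    (∃ b b', M.Adj (inr b) (inr b')) ∨
      ∃ a a' b b', a ≠ a' ∧ M.Adj (inl a) (inr b) ∧ M.Adj (inl a') (inr b') := by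
  obtain ⟨b₁, b₂, hb⟩ := exists_pair_ne V₂
  obtain ⟨w₁, hw₁, -⟩ := hM.1 (hM.2 (inr b₁))
  obtain ⟨w₂, hw₂, -⟩ := hM.1 (hM.2 (inr b₂))
  rcases w₁ with a₁ | b₁'
  · rcases w₂ with a₂ | b₂'
    · refine .inr ⟨a₁, a₂, b₁, b₂, ?_, hw₁.symm, hw₂.symm⟩
      rintro rfl
      exact hb (inr_injective (hM.1.eq_of_adj_left hw₁.symm hw₂.symm))
    · exact .inl ⟨b₂, b₂', hw₂⟩
  · exact .inl ⟨b₁, b₁', hw₁⟩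

end SimpleGraph.Subgraph.IsPerfectMatching

namespace GraphJoin

open Sum

variable {V₁ V₂ : Type*} {G₁ : SimpleGraph V₁} {G₂ : SimpleGraph V₂}

lemma adj_inl_inr (a : V₁) (b : V₂) : (GraphJoin G₁ G₂).Adj (inl a) (inr b) := by
  simp [GraphJoin]

lemma exists_isPerfectMatching_ne [Nontrivial V₁] [Nontrivial V₂]
    {M : (GraphJoin G₁ G₂).Subgraph} (hM : M.IsPerfectMatching) :
    ∃ M' : (GraphJoin G₁ G₂).Subgraph, M'.IsPerfectMatching ∧ M' ≠ M := by
  have of_crossing {a a' b b'} (ha : a ≠ a') (hab : M.Adj (inl a) (inr b))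
      (hab' : M.Adj (inl a') (inr b')) :
      ∃ M' : (GraphJoin G₁ G₂).Subgraph, M'.IsPerfectMatching ∧ M' ≠ M :=
    hM.exists_ne_of_alternating_square hab hab'.symm (adj_inl_inr a b') (adj_inl_inr a' b).symm
      fun hab'' => ha (inl_injective (hM.1.eq_of_adj_right hab'' hab'))
  rcases hM.exists_inl_adj_inl_or_crossing with ⟨a, a', haa'⟩ | ⟨a, a', b, b', ha, hab, hab'⟩
  · rcases hM.exists_inr_adj_inr_or_crossing with ⟨b, b', hbb'⟩ | ⟨a, a', b, b', ha, hab, hab'⟩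
    · exact hM.exists_ne_of_alternating_square haa' hbb' (adj_inl_inr a b) (adj_inl_inr a' b')
        fun hab => inr_ne_inl (hM.1.eq_of_adj_left hab haa')
    · exact of_crossing ha hab hab'
  · exact of_crossing ha hab hab'

end GraphJoin

theorem join_no_unique_perfect_matching {V₁ V₂ : Type*} [Fintype V₁] [Fintype V₂]
    (G₁ : SimpleGraph V₁) (G₂ : SimpleGraph V₂)
    (h₁ : 2 ≤ Fintype.card V₁) (h₂ : 2 ≤ Fintype.card V₂) :
    ¬ ∃! M : (GraphJoin G₁ G₂).Subgraph, M.IsPerfectMatching := by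
  have := Fintype.one_lt_card_iff_nontrivial.mp h₁
  have := Fintype.one_lt_card_iff_nontrivial.mp h₂
  rintro ⟨M, hM, huniq⟩
  obtain ⟨M', hM', hne⟩ := GraphJoin.exists_isPerfectMatching_ne hM
  exact hne (huniq M' hM')
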